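/- For 0 < b < 1/2, there is a constant C with ∫_ℝ (1 + |λ − ξ³|)^{−2(1−b)} dξ ≤ C (1 + |λ|)^{−2/3} for all λ ∈ ℝ. -/
import Mathlib


open MeasureTheory Set

open Real

lemma aux_int {r : ℝ} (hr : 1 < r) : Integrable (fun x : ℝ => (1 + |x|) ^ (-r)) := by
  have h := integrable_one_add_norm (E := ℝ) (μ := volume) (r := r) (by simpa using hr)
  simpa [Real.norm_eq_abs] using h

lemma aux_nonneg (r : ℝ) : 0 ≤ ∫ x : ℝ, (1 + |x|) ^ (-r) :=
  integral_nonneg fun x => by positivity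

lemma aux_large {p : ℝ} (hp1 : 1 < p) {lam : ℝ} (hlam : 1 ≤ lam) :
    (∫ ξ : ℝ, (1 + |lam - ξ ^ 3|) ^ (-p)) ≤
      (4 / 3) * (∫ x : ℝ, (1 + |x|) ^ (-p)) * lam ^ (-(2 : ℝ) / 3) := by
  have hlam0 : (0:ℝ) < lam := by linarith
  set μ : ℝ := lam ^ ((1:ℝ)/3) with hμ
  have hμ0 : 0 < μ := rpow_pos_of_pos hlam0 _
  have hμ3 : μ ^ (3:ℕ) = lam := by
    rw [hμ, ← rpow_natCast (lam ^ ((1:ℝ)/3)) 3, ← rpow_mul hlam0.le]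
    norm_num
  have hμsq : μ ^ (2:ℕ) = lam ^ ((2:ℝ)/3) := by
    rw [hμ, ← rpow_natCast (lam ^ ((1:ℝ)/3)) 2, ← rpow_mul hlam0.le]
    norm_num
  set c : ℝ := (3/4) * lam ^ ((2:ℝ)/3) with hc
  have hc0 : 0 < c := by
    have := rpow_pos_of_pos hlam0 ((2:ℝ)/3); positivity
  -- pointwise bound
  have hpt : ∀ ξ : ℝ, (1 + |lam - ξ ^ 3|) ^ (-p) ≤ (1 + c * |ξ - μ|) ^ (-p) := by
    intro ξ
    have hfac : lam - ξ ^ 3 = (μ - ξ) * (μ ^ 2 + μ * ξ + ξ ^ 2) := by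
      rw [← hμ3]; ring
    have h2 : c ≤ μ ^ 2 + μ * ξ + ξ ^ 2 := by
      rw [hc, ← hμsq]; nlinarith [sq_nonneg (ξ + μ / 2)]
    have h3 : c * |ξ - μ| ≤ |lam - ξ ^ 3| := by
      rw [hfac, abs_mul, abs_sub_comm μ ξ, abs_of_nonneg (by linarith [hc0] : (0:ℝ) ≤ μ ^ 2 + μ * ξ + ξ ^ 2)]
      rw [mul_comm]
      exact mul_le_mul_of_nonneg_left h2 (abs_nonneg _)
    exact rpow_le_rpow_of_nonpos (by positivity) (by linarith) (by linarith)
  -- integrable majorant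
  have hbase : Integrable (fun y : ℝ => (1 + |y|) ^ (-p)) := aux_int hp1
  have hg1 : Integrable (fun ξ : ℝ => (1 + |c * ξ|) ^ (-p)) := by
    simpa using hbase.comp_mul_left' hc0.ne'
  have hg : Integrable (fun ξ : ℝ => (1 + c * |ξ - μ|) ^ (-p)) := by
    have := hg1.comp_sub_right μ
    refine this.congr (Filter.Eventually.of_forall fun ξ => ?_)
    simp only
    rw [abs_mul, abs_of_pos hc0]
  have hI : (∫ ξ : ℝ, (1 + |lam - ξ ^ 3|) ^ (-p)) ≤ ∫ ξ : ℝ, (1 + c * |ξ - μ|) ^ (-p) := by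
    refine integral_mono_of_nonneg (Filter.Eventually.of_forall fun ξ => by positivity) hg
      (Filter.Eventually.of_forall hpt)
  have heq : (∫ ξ : ℝ, (1 + c * |ξ - μ|) ^ (-p)) = c⁻¹ * ∫ x : ℝ, (1 + |x|) ^ (-p) := by
    have e1 : (∫ ξ : ℝ, (1 + c * |ξ - μ|) ^ (-p)) = ∫ ξ : ℝ, (1 + |c * (ξ - μ)|) ^ (-p) := by
      congr 1; funext ξ; rw [abs_mul, abs_of_pos hc0]
    rw [e1]
    have e2 : (∫ ξ : ℝ, (1 + |c * (ξ - μ)|) ^ (-p)) = ∫ ξ : ℝ, (1 + |c * ξ|) ^ (-p) :=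
      integral_sub_right_eq_self (fun ξ : ℝ => (1 + |c * ξ|) ^ (-p)) μ
    rw [e2, Measure.integral_comp_mul_left (fun y : ℝ => (1 + |y|) ^ (-p)) c, smul_eq_mul,
      abs_of_pos (inv_pos.mpr hc0)]
  have hcinv : c⁻¹ = (4/3) * lam ^ (-(2:ℝ)/3) := by
    rw [hc, mul_inv, neg_div, rpow_neg hlam0.le]
    norm_num
  calc (∫ ξ : ℝ, (1 + |lam - ξ ^ 3|) ^ (-p)) ≤ c⁻¹ * ∫ x : ℝ, (1 + |x|) ^ (-p) := heq ▸ hI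
    _ = (4/3) * (∫ x : ℝ, (1 + |x|) ^ (-p)) * lam ^ (-(2:ℝ)/3) := by rw [hcinv]; ring

lemma aux_small {p : ℝ} (hp1 : 1 < p) {lam : ℝ} (hlam : |lam| ≤ 1) (ξ : ℝ) :
    (1 + |lam - ξ ^ 3|) ^ (-p) ≤ (8:ℝ) ^ p * (1 + |ξ|) ^ (-(3 * p)) := by
  have h1 : (0:ℝ) < 1 + |lam - ξ ^ 3| := by positivity
  have h2 : (0:ℝ) < 1 + |ξ| := by positivity
  have habs : |ξ| ^ 3 - |lam| ≤ |lam - ξ ^ 3| := by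
    rw [abs_sub_comm]
    calc |ξ| ^ 3 - |lam| = |ξ ^ 3| - |lam| := by rw [abs_pow]
      _ ≤ |ξ ^ 3 - lam| := abs_sub_abs_le_abs_sub _ _
  have key : (1 + |ξ|) ^ (3:ℕ) ≤ 8 * (1 + |lam - ξ ^ 3|) := by
    nlinarith [abs_nonneg ξ, abs_nonneg (lam - ξ ^ 3), abs_nonneg lam,
      sq_nonneg (|ξ| - 1), mul_nonneg (sq_nonneg (|ξ| - 1)) (abs_nonneg ξ)]
  have key' : (1 + |ξ|) ^ (3 * p) ≤ 8 ^ p * (1 + |lam - ξ ^ 3|) ^ p := by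
    have e : (1 + |ξ|) ^ (3 * p) = ((1 + |ξ|) ^ (3:ℕ)) ^ p := by
      rw [← rpow_natCast (1 + |ξ|) 3, ← rpow_mul h2.le]; norm_num
    rw [e, ← mul_rpow (by norm_num) h1.le]
    exact rpow_le_rpow (by positivity) key (by linarith)
  rw [rpow_neg h1.le, rpow_neg h2.le,
    show (8:ℝ) ^ p * ((1 + |ξ|) ^ (3 * p))⁻¹ = 8 ^ p / (1 + |ξ|) ^ (3 * p) from
      (div_eq_mul_inv _ _).symm,
    inv_eq_one_div, div_le_div_iff₀ (rpow_pos_of_pos h1 p) (rpow_pos_of_pos h2 (3 * p))]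
  nlinarith [key']


/-- For `0 < b < 1/2` there is a constant `C` with
`∫_ℝ (1 + |λ − ξ³|)^{−2(1−b)} dξ ≤ C (1 + |λ|)^{−2/3}` for all `λ ∈ ℝ`. -/
theorem stmt15 (b : ℝ) (hb0 : 0 < b) (hb1 : b < 1 / 2) :
    ∃ C > 0, ∀ lam : ℝ,
      (∫ ξ : ℝ, (1 + |lam - ξ ^ 3|) ^ (-(2 * (1 - b)))) ≤ C * (1 + |lam|) ^ (-(2 : ℝ) / 3) := by
  set p : ℝ := 2 * (1 - b) with hp
  have hp1 : 1 < p := by rw [hp]; linarith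
  have h3p : 1 < 3 * p := by linarith
  set K1 : ℝ := ∫ x : ℝ, (1 + |x|) ^ (-(3 * p)) with hK1def
  set K2 : ℝ := ∫ x : ℝ, (1 + |x|) ^ (-p) with hK2def
  have hK1 : 0 ≤ K1 := aux_nonneg _
  have hK2 : 0 ≤ K2 := aux_nonneg _
  set A : ℝ := (2:ℝ) ^ ((2:ℝ)/3) with hA
  have hA0 : 0 < A := rpow_pos_of_pos two_pos _
  have h8 : (0:ℝ) ≤ (8:ℝ) ^ p := rpow_nonneg (by norm_num) _
  have hX : (0:ℝ) ≤ (8:ℝ) ^ p * K1 := mul_nonneg h8 hK1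
  set C : ℝ := A * ((8:ℝ) ^ p * K1 + (4/3) * K2) + 1 with hCdef
  have hC : 0 < C := by
    rw [hCdef]
    nlinarith [mul_nonneg hA0.le (by linarith : (0:ℝ) ≤ (8:ℝ) ^ p * K1 + (4/3) * K2)]
  refine ⟨C, hC, fun lam => ?_⟩
  have hM0 : (0:ℝ) < 1 + |lam| := by positivity
  have hAA : A * A⁻¹ = 1 := mul_inv_cancel₀ hA0.ne'
  rcases le_or_gt |lam| 1 with h | h
  · -- small case
    have hint : Integrable (fun ξ : ℝ => (8:ℝ) ^ p * (1 + |ξ|) ^ (-(3 * p))) :=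
      (aux_int h3p).const_mul _
    have hI : (∫ ξ : ℝ, (1 + |lam - ξ ^ 3|) ^ (-p)) ≤ (8:ℝ) ^ p * K1 := by
      have h' := integral_mono_of_nonneg
        (Filter.Eventually.of_forall fun ξ => by positivity) hint
        (Filter.Eventually.of_forall (aux_small hp1 h))
      rwa [integral_const_mul] at h'
    have hMA : A⁻¹ ≤ (1 + |lam|) ^ (-(2:ℝ)/3) := by
      have h2 : (1 + |lam|) ≤ 2 := by linarith
      have h' := rpow_le_rpow_of_nonpos hM0 h2 (by norm_num : (-(2:ℝ)/3) ≤ 0)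
      have e : (2:ℝ) ^ (-(2:ℝ)/3) = A⁻¹ := by
        rw [hA, neg_div, rpow_neg (by norm_num : (0:ℝ) ≤ 2)]
      linarith [e ▸ h']
    calc (∫ ξ : ℝ, (1 + |lam - ξ ^ 3|) ^ (-p)) ≤ (8:ℝ) ^ p * K1 := hI
      _ = (A * ((8:ℝ) ^ p * K1)) * A⁻¹ := by
          field_simp
      _ ≤ C * A⁻¹ := by
          have : A * ((8:ℝ) ^ p * K1) ≤ C := by
            rw [hCdef]
            nlinarith [mul_nonneg hA0.le (by linarith : (0:ℝ) ≤ (4/3) * K2)]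
          exact mul_le_mul_of_nonneg_right this (inv_pos.mpr hA0).le
      _ ≤ C * (1 + |lam|) ^ (-(2:ℝ)/3) := mul_le_mul_of_nonneg_left hMA hC.le
  · -- large case
    have key : (∫ ξ : ℝ, (1 + |lam - ξ ^ 3|) ^ (-p)) ≤
        (4/3) * K2 * |lam| ^ (-(2:ℝ)/3) := by
      rcases le_or_gt 0 lam with hl | hl
      · have h1 : 1 ≤ lam := by rw [abs_of_nonneg hl] at h; exact h.le
        have := aux_large hp1 h1
        rwa [abs_of_nonneg hl, hK2def]
      · have h1 : 1 ≤ -lam := by rw [abs_of_neg hl] at h; exact h.le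
        have hrefl : (∫ ξ : ℝ, (1 + |lam - ξ ^ 3|) ^ (-p)) =
            ∫ ξ : ℝ, (1 + |(-lam) - ξ ^ 3|) ^ (-p) := by
          have e : (fun ξ : ℝ => (1 + |lam - ξ ^ 3|) ^ (-p)) =
              fun ξ : ℝ => (1 + |(-lam) - (-ξ) ^ 3|) ^ (-p) := by
            funext ξ
            rw [show -lam - (-ξ) ^ 3 = -(lam - ξ ^ 3) by ring, abs_neg]
          rw [e]
          exact integral_neg_eq_self (fun ξ : ℝ => (1 + |(-lam) - ξ ^ 3|) ^ (-p)) volume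
        rw [hrefl, abs_of_neg hl]
        have := aux_large hp1 h1
        rwa [hK2def]
    have hL0 : (0:ℝ) ≤ |lam| ^ (-(2:ℝ)/3) := rpow_nonneg (abs_nonneg lam) _
    have hmono : (2 * |lam|) ^ (-(2:ℝ)/3) ≤ (1 + |lam|) ^ (-(2:ℝ)/3) :=
      rpow_le_rpow_of_nonpos (by positivity) (by linarith) (by norm_num)
    have hsplit : (2 * |lam|) ^ (-(2:ℝ)/3) = A⁻¹ * |lam| ^ (-(2:ℝ)/3) := by
      rw [mul_rpow (by norm_num : (0:ℝ) ≤ 2) (abs_nonneg lam), hA, neg_div,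
        rpow_neg (by norm_num : (0:ℝ) ≤ 2)]
    calc (∫ ξ : ℝ, (1 + |lam - ξ ^ 3|) ^ (-p)) ≤ (4/3) * K2 * |lam| ^ (-(2:ℝ)/3) := key
      _ = (A * ((4/3) * K2)) * ((2 * |lam|) ^ (-(2:ℝ)/3)) := by
          rw [hsplit]; field_simp
      _ ≤ C * ((2 * |lam|) ^ (-(2:ℝ)/3)) := by
          have hCge : A * ((4/3) * K2) ≤ C := by
            rw [hCdef]
            nlinarith [mul_nonneg hA0.le hX]
          exact mul_le_mul_of_nonneg_right hCge (rpow_nonneg (by positivity) _)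
      _ ≤ C * (1 + |lam|) ^ (-(2:ℝ)/3) := mul_le_mul_of_nonneg_left hmono hC.le
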